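/- arXiv:2104.12005 — 3 statements merged into one kernel-verified Lean document; each statement's English description precedes it below -/
import Mathlib

section
/- Let z, A, B, N₀ > 0 with z < A/(N₀ ln 2). Then the unique solution t > 0 of z = t·B·log₂(1 + A/(t·B·N₀)) is given by t = −z·ln(2)·A / (B·(z·N₀·ln 2 + W₋₁(b)·A)), where b = −2^{−z·N₀/A}·z·N₀·ln(2)/A and W₋₁ denotes the lower branch of the Lambert W function. -/
/-!
Put `c = z N₀ ln 2 / A`, so that the feasibility condition reads `c < 1` and `b = -c e^{-c}`.
In the normalised variable `s = t B N₀ / A` the equation becomes `s ln (1 + 1/s) = c`.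
Since `w e^w = -c e^{-c}` gives `-w / c = e^{-(c + w)}`, the choice `s = -c / (c + w)` makes
`1 + 1/s = -w / c`, whose logarithm is `-(c + w) = c / s`; and `s > 0` because `w ≤ -1 < -c`.
-/

open Real

lemma neg_div_eq_exp_of_mul_exp_eq {c w : ℝ} (hc : c ≠ 0) (hw : w * exp w = -c * exp (-c)) :
    -w / c = exp (-(c + w)) := by
  rw [neg_add, exp_add, exp_neg w, div_eq_iff hc]
  field_simp
  linarith

lemma mul_log_one_add_inv_eq_of_mul_exp_eq {c w : ℝ} (hc : c ≠ 0) (hcw : c + w ≠ 0)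
    (hw : w * exp w = -c * exp (-c)) :
    -c / (c + w) * log (1 + (-c / (c + w))⁻¹) = c := by
  have hinv : 1 + (-c / (c + w))⁻¹ = -w / c := by
    field_simp
    ring
  rw [hinv, neg_div_eq_exp_of_mul_exp_eq hc hw, log_exp]
  field_simp

lemma mul_mul_logb_one_add_div {A B N₀ s : ℝ} (hA : A ≠ 0) (hB : B ≠ 0) (hN₀ : N₀ ≠ 0) :
    A / (B * N₀) * s * B * logb 2 (1 + A / (A / (B * N₀) * s * B * N₀)) =
      A / (N₀ * log 2) * (s * log (1 + s⁻¹)) := by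
  have hinv : A / (A / (B * N₀) * s * B * N₀) = s⁻¹ := by
    field_simp
  rw [hinv, logb]
  field_simp

/-- Closed-form solution via the lower branch `W₋₁` of the Lambert W function,
characterized by `w * exp w = b` with `w ≤ -1`. -/
theorem closed_form_solution_lambertW (z A B N₀ : ℝ) (hz : 0 < z) (hA : 0 < A)
    (hB : 0 < B) (hN₀ : 0 < N₀) (hfeas : z < A / (N₀ * Real.log 2))
    (b : ℝ) (hb : b = -(2 : ℝ) ^ (-(z * N₀) / A) * z * N₀ * Real.log 2 / A)
    (w : ℝ) (hw_branch : w ≤ -1) (hw : w * Real.exp w = b) :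
    let t := -(z * Real.log 2 * A) / (B * (z * N₀ * Real.log 2 + w * A))
    0 < t ∧ z = t * B * Real.logb 2 (1 + A / (t * B * N₀)) := by
  intro t
  have hL : 0 < log 2 := log_pos one_lt_two
  set c := z * N₀ * log 2 / A with hc_def
  have hc : 0 < c := by positivity
  have hc_lt_one : c < 1 := by
    rw [div_lt_one hA]
    rwa [lt_div_iff₀ (by positivity), ← mul_assoc] at hfeas
  have hcw : c + w < 0 := by linarith
  have hb_eq : b = -c * exp (-c) := by
    rw [hb, rpow_def_of_pos two_pos, hc_def]
    field_simp
  have ht : t = A / (B * N₀) * (-c / (c + w)) := by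
    simp only [t, hc_def]
    field_simp
  refine ⟨ht ▸ mul_pos (by positivity) (div_pos_of_neg_of_neg (by linarith) hcw), ?_⟩
  rw [ht, mul_mul_logb_one_add_div hA.ne' hB.ne' hN₀.ne',
    mul_log_one_add_inv_eq_of_mul_exp_eq hc.ne' hcw.ne (hw.trans hb_eq), hc_def]
  field_simp
end

section
/- Suppose A₁ ≥ A₂ ≥ … ≥ A_N > 0 and all users require equal data Z > 0. Then t > 0 satisfies the full family of 2^N − 1 constraints |S|·Z ≤ t·B·log₂(1 + (Σ_{i∈S} Aᵢ)/(t·B·N₀)) for all nonempty S ⊆ {1,…,N} if and only if it satisfies the N constraints (N+1−n)·Z ≤ t·B·log₂(1 + (Σ_{i=n}^{N} Aᵢ)/(t·B·N₀)) for n = 1,…,N. -/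
-- auxiliary: j-th smallest element of a k-subset of Fin N is ≤ N - k + j
lemma orderEmb_le {N k : ℕ} (S : Finset (Fin N)) (h : S.card = k) (j : Fin k) :
    (S.orderEmbOfFin h j : ℕ) + k ≤ N + j := by
  have hinj : Function.Injective (S.orderEmbOfFin h) :=
    (S.orderEmbOfFin h).injective
  have hsub : (Finset.Ici j).image (S.orderEmbOfFin h) ⊆
      Finset.Ici (S.orderEmbOfFin h j) := by
    intro x hx
    simp only [Finset.mem_image, Finset.mem_Ici] at hx ⊢
    obtain ⟨j', hj', rfl⟩ := hx
    exact (S.orderEmbOfFin h).monotone hj'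
  have hcard := Finset.card_le_card hsub
  rw [Finset.card_image_of_injective _ hinj, Fin.card_Ici, Fin.card_Ici] at hcard
  omega

lemma tail_sum_le {N : ℕ} (A : Fin N → ℝ)
    (hord : ∀ i j : Fin N, i ≤ j → A j ≤ A i)
    (S : Finset (Fin N)) (hS : S.Nonempty) :
    ∑ i ∈ Finset.univ.filter
        (fun i : Fin N => (⟨N - S.card, by
          have h1 : 1 ≤ S.card := Finset.card_pos.mpr hS
          have h2 : S.card ≤ N := by simpa using Finset.card_le_univ S
          omega⟩ : Fin N) ≤ i), A i
      ≤ ∑ i ∈ S, A i := by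
  set k := S.card with hk
  have h1 : 1 ≤ k := Finset.card_pos.mpr hS
  have h2 : k ≤ N := by simpa using Finset.card_le_univ S
  set f := S.orderEmbOfFin (rfl : S.card = k) with hf
  -- emb : Fin k → Fin N, j ↦ N - k + j
  set emb : Fin k → Fin N := fun j => ⟨N - k + j.val, by omega⟩ with hemb
  have hembinj : Function.Injective emb := by
    intro a b hab
    simpa [hemb, Fin.ext_iff] using hab
  have hT : Finset.univ.filter
      (fun i : Fin N => (⟨N - k, by omega⟩ : Fin N) ≤ i)
      = Finset.univ.image emb := by
    ext x
    simp only [Finset.mem_filter, Finset.mem_univ, true_and, Finset.mem_image,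
      Fin.le_def, hemb]
    constructor
    · intro hx
      exact ⟨⟨x.val - (N - k), by omega⟩, by simp [Fin.ext_iff]; omega⟩
    · rintro ⟨j, -, rfl⟩; simp
  have hSim : S = Finset.univ.image f := by
    ext x
    simp only [Finset.mem_image, Finset.mem_univ, true_and]
    constructor
    · intro hx
      have := Finset.range_orderEmbOfFin S (rfl : S.card = k)
      have hx' : x ∈ Set.range f := by rw [hf, this]; exact hx
      obtain ⟨j, hj⟩ := hx'
      exact ⟨j, hj⟩
    · rintro ⟨j, rfl⟩; exact Finset.orderEmbOfFin_mem S rfl j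
  rw [hT, hSim, Finset.sum_image (fun a _ b _ h => hembinj h),
    Finset.sum_image (fun a _ b _ h => f.injective h)]
  apply Finset.sum_le_sum
  intro j _
  apply hord
  have h3 := orderEmb_le S (rfl : S.card = k) j
  rw [← hf] at h3
  simp only [Fin.le_def, hemb]
  omega

theorem mac_constraints_reduce_to_tail (N : ℕ) (B N₀ Z t : ℝ)
    (hB : 0 < B) (hN₀ : 0 < N₀) (hZ : 0 < Z) (ht : 0 < t)
    (A : Fin N → ℝ) (hA : ∀ i, 0 < A i)
    (hord : ∀ i j : Fin N, i ≤ j → A j ≤ A i) :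
    (∀ S : Finset (Fin N), S.Nonempty →
        (S.card : ℝ) * Z ≤ t * B * Real.logb 2 (1 + (∑ i ∈ S, A i) / (t * B * N₀))) ↔
    (∀ n : Fin N,
        ((N - (n : ℕ) : ℕ) : ℝ) * Z ≤
          t * B * Real.logb 2
            (1 + (∑ i ∈ Finset.univ.filter (fun i : Fin N => n ≤ i), A i) / (t * B * N₀))) := by
  constructor
  · intro h n
    have hcard : (Finset.univ.filter (fun i : Fin N => n ≤ i)).card = N - n.val := by
      have : Finset.univ.filter (fun i : Fin N => n ≤ i) = Finset.Ici n := by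
        ext x; simp
      rw [this, Fin.card_Ici]
    have hne : (Finset.univ.filter (fun i : Fin N => n ≤ i)).Nonempty :=
      ⟨n, by simp⟩
    have := h _ hne
    rwa [hcard] at this
  · intro h S hS
    set k := S.card with hk
    have h1 : 1 ≤ k := Finset.card_pos.mpr hS
    have h2 : k ≤ N := by simpa using Finset.card_le_univ S
    set n : Fin N := ⟨N - k, by omega⟩ with hn
    have hcoef : (N - (n : ℕ)) = k := by simp [hn]; omega
    have htail := h n
    rw [hcoef] at htail
    have hsum := tail_sum_le A hord S hS
    have htBN : 0 < t * B * N₀ := by positivity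
    have hpos : (0:ℝ) < 1 + (∑ i ∈ Finset.univ.filter (fun i : Fin N => n ≤ i), A i)
        / (t * B * N₀) := by
      have : 0 ≤ ∑ i ∈ Finset.univ.filter (fun i : Fin N => n ≤ i), A i :=
        Finset.sum_nonneg (fun i _ => (hA i).le)
      positivity
    refine htail.trans ?_
    have hlog : Real.logb 2 (1 + (∑ i ∈ Finset.univ.filter (fun i : Fin N => n ≤ i), A i)
          / (t * B * N₀))
        ≤ Real.logb 2 (1 + (∑ i ∈ S, A i) / (t * B * N₀)) := by
      apply Real.logb_le_logb_of_le one_lt_two hpos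
      gcongr
    have htB : 0 ≤ t * B := by positivity
    exact mul_le_mul_of_nonneg_left hlog htB
end

section
/- The function h(t̃) = ln(2^{(Z/B)·e^{−t̃}} − 1) is convex in t̃ ∈ ℝ, for any constants Z, B > 0. -/
/-!
Write `2 ^ (Z / B * e^{-t}) = exp u` with `u = a e^{-t}`, `a = Z log 2 / B > 0`. Then
`h'(t) = -u / (1 - e^{-u})`. As `t` grows, `u` decreases, and `u / (1 - e^{-u})` is increasing in
`u > 0`, being the reciprocal of the secant slope through `0` of the concave function `1 - e^{-u}`.
So `h'` is monotone and `h` is convex.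
-/

open Real Set

lemma convexOn_exp_neg : ConvexOn ℝ univ fun x : ℝ => exp (-x) :=
  convexOn_exp.comp_linearMap (-LinearMap.id)

lemma monotoneOn_div_one_sub_exp_neg : MonotoneOn (fun u : ℝ => u / (1 - exp (-u))) (Ioi 0) := by
  intro u (hu : 0 < u) v (hv : 0 < v) huv
  have hslope : (1 - exp (-v)) / v ≤ (1 - exp (-u)) / u := by
    have := convexOn_exp_neg.secant_mono (mem_univ 0) (mem_univ u) (mem_univ v) hu.ne' hv.ne' huv
    simp only [neg_zero, exp_zero, sub_zero] at this
    rw [← neg_le_neg_iff]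
    simpa only [← neg_div, neg_sub] using this
  have hpos : 0 < (1 - exp (-v)) / v := div_pos (by simpa using hv) hv
  simpa only [one_div_div] using one_div_le_one_div_of_le hpos hslope

lemma hasDerivAt_log_exp_sub_one {x : ℝ} (hx : 0 < x) :
    HasDerivAt (fun x => log (exp x - 1)) (1 - exp (-x))⁻¹ x := by
  have hpos : 0 < exp x - 1 := by simpa using hx
  convert ((hasDerivAt_exp x).sub_const 1).log hpos.ne' using 1
  rw [exp_neg]
  field_simp

lemma hasDerivAt_log_exp_mul_exp_neg_sub_one {a : ℝ} (ha : 0 < a) (t : ℝ) :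
    HasDerivAt (fun t => log (exp (a * exp (-t)) - 1))
      (-(a * exp (-t) / (1 - exp (-(a * exp (-t)))))) t := by
  have hu : HasDerivAt (fun t => a * exp (-t)) (-(a * exp (-t))) t := by
    simpa using ((hasDerivAt_neg t).exp).const_mul a
  exact ((hasDerivAt_log_exp_sub_one (by positivity)).comp t hu).congr_deriv (by ring)

lemma convexOn_log_exp_mul_exp_neg_sub_one {a : ℝ} (ha : 0 < a) :
    ConvexOn ℝ univ fun t => log (exp (a * exp (-t)) - 1) := by
  have hderiv := fun t => hasDerivAt_log_exp_mul_exp_neg_sub_one ha t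
  refine Monotone.convexOn_univ_of_deriv (fun t => (hderiv t).differentiableAt) ?_
  rw [funext fun t => (hderiv t).deriv]
  intro s t hst
  have hu_pos (r : ℝ) : a * exp (-r) ∈ Ioi 0 := mul_pos ha (exp_pos _)
  exact neg_le_neg (monotoneOn_div_one_sub_exp_neg (hu_pos t) (hu_pos s) (by gcongr))

theorem log_transformed_rate_term_convex (Z B : ℝ) (hZ : 0 < Z) (hB : 0 < B) :
    ConvexOn ℝ Set.univ
      (fun tt : ℝ => Real.log ((2 : ℝ) ^ (Z / B * Real.exp (-tt)) - 1)) := by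
  convert convexOn_log_exp_mul_exp_neg_sub_one (by positivity : 0 < log 2 * (Z / B)) using 3 with t
  rw [rpow_def_of_pos two_pos, mul_assoc]
end
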